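/- In model M1 with symmetric, independent innovations ε₀,...,ε_n, for any convex φ : ℝ → ℝ and any k ≤ n, the function h(σ₀, e₀, ..., e_{k−1}, x) = E[φ(S_n) | σ₀, ε₀ = e₀, ..., ε_{k−1} = e_{k−1}, ε_k = x], where S_n = σ₀ε₀ + g₁ε₁ + ... + g_nε_n is the cumulated sum, is convex in x for each fixed value of σ₀, e₀, ..., e_{k−1}. -/

import Mathlib

open MeasureTheory ProbabilityTheory Set Finset

/-!
Given `ε₀ = e₀, …, ε_{k-1} = e_{k-1}` and `ε_k = x`, the innovations after `k` are independent
and symmetric, so their law is invariant under every sign flip, and `φ (S_n)` may be replaced by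
its average over the `2^{n-k}` sign patterns of `ε_{k+1}, …, ε_n`. Since `σ_j` sees the
innovations only through their absolute values, for each fixed `ω` this average is
`Σ_A φ (t x + Σ_{j>k} ± σ_j(x) ε_j)` with `t` affine and every `|σ_j(x) ε_j|` convex in `x`
(`f` being increasing and componentwise convex). For convex `φ`, the sign average
`Σ_A φ (t + Σ_j ± h_j)` is jointly convex in `(t, h)` and increasing in every `|h_j|`, hence
convex in `x`; integrating over `ω` preserves convexity.
-/

section SignFlip

variable {ι : Type*} [DecidableEq ι]

def signFlip (A : Finset ι) (v : ι → ℝ) : ι → ℝ :=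
  fun j => if j ∈ A then -v j else v j

lemma signFlip_of_notMem {A : Finset ι} {j : ι} (hj : j ∉ A) (v : ι → ℝ) :
    signFlip A v j = v j :=
  if_neg hj

lemma abs_signFlip (A : Finset ι) (v : ι → ℝ) (j : ι) : |signFlip A v j| = |v j| := by
  unfold signFlip; split_ifs <;> simp

lemma measurable_signFlip (A : Finset ι) :
    Measurable (signFlip A) :=
  measurable_pi_lambda _ fun j => by
    unfold signFlip
    split_ifs
    · exact (measurable_pi_apply j).neg
    · exact measurable_pi_apply j

/-- `2 ^ #T` times the mean of `φ (t + Σ_{j ∈ T} ± h j)` over independent fair signs. -/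
def signSum (φ : ℝ → ℝ) (T : Finset ι) (t : ℝ) (h : ι → ℝ) : ℝ :=
  ∑ A ∈ T.powerset, φ (t + ∑ j ∈ T, signFlip A h j)

lemma signSum_empty (φ : ℝ → ℝ) (t : ℝ) (h : ι → ℝ) : signSum φ ∅ t h = φ t := by
  simp [signSum]

lemma signSum_insert (φ : ℝ → ℝ) {a : ι} {T : Finset ι} (ha : a ∉ T) (t : ℝ) (h : ι → ℝ) :
    signSum φ (insert a T) t h = signSum φ T (t + h a) h + signSum φ T (t - h a) h := by
  unfold signSum
  rw [sum_powerset_insert ha]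
  congr 1 <;> refine sum_congr rfl fun A hA => congrArg φ ?_
  · have haA : a ∉ A := fun h => ha (mem_powerset.1 hA h)
    rw [sum_insert ha, signFlip_of_notMem haA, add_assoc]
  · have hT : ∀ j ∈ T, signFlip (insert a A) h j = signFlip A h j := fun j hj => by
      simp [signFlip, ne_of_mem_of_not_mem hj ha]
    rw [sum_insert ha, sum_congr rfl hT, signFlip, if_pos (mem_insert_self a A)]
    ring

lemma ConvexOn.add_sub_le_add_sub {ψ : ℝ → ℝ} (hψ : ConvexOn ℝ univ ψ) (t : ℝ) {r r' : ℝ}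
    (hr : |r| ≤ |r'|) : ψ (t + r) + ψ (t - r) ≤ ψ (t + r') + ψ (t - r') := by
  wlog hr' : 0 < r' generalizing r'
  · rcases (not_lt.1 hr').lt_or_eq with hneg | rfl
    · have := this (r' := -r') (by rwa [abs_neg]) (neg_pos.2 hneg)
      rwa [sub_neg_eq_add, ← sub_eq_add_neg, add_comm (ψ (t - r'))] at this
    · obtain rfl : r = 0 := abs_nonpos_iff.1 (by simpa using hr)
      rfl
  rw [abs_of_pos hr'] at hr
  obtain ⟨hr₁, hr₂⟩ := abs_le.1 hr
  have h2r' : 0 < 2 * r' := by positivity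
  have ha : 0 ≤ (r' + r) / (2 * r') := div_nonneg (by linarith) h2r'.le
  have hb : 0 ≤ (r' - r) / (2 * r') := div_nonneg (by linarith) h2r'.le
  have hab : (r' + r) / (2 * r') + (r' - r) / (2 * r') = 1 := by field_simp; ring
  have hba : (r' - r) / (2 * r') + (r' + r) / (2 * r') = 1 := by rw [add_comm, hab]
  have h₁ := hψ.2 (mem_univ (t + r')) (mem_univ (t - r')) ha hb hab
  have h₂ := hψ.2 (mem_univ (t + r')) (mem_univ (t - r')) hb ha hba
  simp only [smul_eq_mul] at h₁ h₂
  have e₁ : (r' + r) / (2 * r') * (t + r') + (r' - r) / (2 * r') * (t - r') = t + r := by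
    field_simp; ring
  have e₂ : (r' - r) / (2 * r') * (t + r') + (r' + r) / (2 * r') * (t - r') = t - r := by
    field_simp; ring
  rw [e₁] at h₁
  rw [e₂] at h₂
  linear_combination h₁ + h₂ + (ψ (t + r') + ψ (t - r')) * hab

lemma convexOn_uncurry_signSum {φ : ℝ → ℝ} (hφ : ConvexOn ℝ univ φ) (T : Finset ι) :
    ConvexOn ℝ univ fun p : ℝ × (ι → ℝ) => signSum φ T p.1 p.2 := by
  refine ⟨convex_univ, fun p _ q _ a b ha hb hab => ?_⟩
  simp only [signSum, Prod.fst_add, Prod.snd_add, Prod.smul_fst, Prod.smul_snd, smul_eq_mul,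
    mul_sum, ← sum_add_distrib]
  refine sum_le_sum fun A _ => ?_
  have hsum : ∑ j ∈ T, signFlip A (a • p.2 + b • q.2) j
      = a * ∑ j ∈ T, signFlip A p.2 j + b * ∑ j ∈ T, signFlip A q.2 j := by
    rw [mul_sum, mul_sum, ← sum_add_distrib]
    refine sum_congr rfl fun j _ => ?_
    simp only [signFlip, Pi.add_apply, Pi.smul_apply, smul_eq_mul]
    split_ifs <;> ring
  have hlin : a * p.1 + b * q.1 + ∑ j ∈ T, signFlip A (a • p.2 + b • q.2) j
      = a * (p.1 + ∑ j ∈ T, signFlip A p.2 j) + b * (q.1 + ∑ j ∈ T, signFlip A q.2 j) := by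
    rw [hsum]; ring
  rw [hlin]
  simpa using hφ.2 (mem_univ _) (mem_univ _) ha hb hab

lemma convexOn_signSum {φ : ℝ → ℝ} (hφ : ConvexOn ℝ univ φ) (T : Finset ι) (h : ι → ℝ) :
    ConvexOn ℝ univ fun t => signSum φ T t h := by
  refine ⟨convex_univ, fun x _ y _ a b ha hb hab => ?_⟩
  have := (convexOn_uncurry_signSum hφ T).2 (mem_univ (x, h)) (mem_univ (y, h)) ha hb hab
  rwa [Prod.smul_mk, Prod.smul_mk, Prod.mk_add_mk, ← add_smul, hab, one_smul] at this

lemma signSum_mono {φ : ℝ → ℝ} (hφ : ConvexOn ℝ univ φ) {T : Finset ι} {h h' : ι → ℝ}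
    (hle : ∀ j ∈ T, |h j| ≤ |h' j|) (t : ℝ) : signSum φ T t h ≤ signSum φ T t h' := by
  induction T using Finset.induction_on generalizing t with
  | empty => simp [signSum_empty]
  | @insert a T ha ih =>
    have ih' := ih fun j hj => hle j (mem_insert_of_mem hj)
    rw [signSum_insert φ ha, signSum_insert φ ha]
    calc signSum φ T (t + h a) h + signSum φ T (t - h a) h
        ≤ signSum φ T (t + h a) h' + signSum φ T (t - h a) h' := add_le_add (ih' _) (ih' _)
      _ ≤ signSum φ T (t + h' a) h' + signSum φ T (t - h' a) h' :=
        (convexOn_signSum hφ T h').add_sub_le_add_sub t (hle a (mem_insert_self a T))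

lemma signSum_abs {φ : ℝ → ℝ} (hφ : ConvexOn ℝ univ φ) (T : Finset ι) (t : ℝ) (h : ι → ℝ) :
    signSum φ T t (fun j => |h j|) = signSum φ T t h :=
  le_antisymm (signSum_mono hφ (fun _ _ => (abs_abs _).le) t)
    (signSum_mono hφ (fun _ _ => (abs_abs _).ge) t)

lemma convexOn_signSum_of_convexOn_abs {φ : ℝ → ℝ} (hφ : ConvexOn ℝ univ φ) (T : Finset ι)
    (c d : ℝ) {h : ℝ → ι → ℝ} (hh : ∀ j ∈ T, ConvexOn ℝ univ fun x => |h x j|) :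
    ConvexOn ℝ univ fun x => signSum φ T (c + d * x) (h x) := by
  refine ⟨convex_univ, fun x _ y _ a b ha hb hab => ?_⟩
  have ht : c + d * (a • x + b • y) = a * (c + d * x) + b * (c + d * y) := by
    simp only [smul_eq_mul]; linear_combination (-c) * hab
  have habs : ∀ j ∈ T, |h (a • x + b • y) j| ≤ |(a * |h x j| + b * |h y j|)| := fun j hj =>
    ((hh j hj).2 (mem_univ x) (mem_univ y) ha hb hab).trans (le_abs_self _)
  dsimp only
  rw [ht, ← signSum_abs hφ T (c + d * x), ← signSum_abs hφ T (c + d * y)]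
  calc signSum φ T (a * (c + d * x) + b * (c + d * y)) (h (a • x + b • y))
      ≤ signSum φ T (a * (c + d * x) + b * (c + d * y))
          (a • (fun j => |h x j|) + b • fun j => |h y j|) := signSum_mono hφ habs _
    _ ≤ a • signSum φ T (c + d * x) (fun j => |h x j|)
          + b • signSum φ T (c + d * y) (fun j => |h y j|) :=
      (convexOn_uncurry_signSum hφ T).2 (mem_univ (_, _)) (mem_univ (_, _)) ha hb hab

end SignFlip

open Filter Topology in
lemma ConvexOn.continuousWithinAt_Ici_of_monotoneOn {ψ : ℝ → ℝ} {y : ℝ}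
    (hc : ConvexOn ℝ (Ici y) ψ) (hm : MonotoneOn ψ (Ici y)) : ContinuousWithinAt ψ (Ici y) y := by
  have hchord : Tendsto (fun x => ψ y + (x - y) * (ψ (y + 1) - ψ y)) (𝓝[≥] y) (𝓝 (ψ y)) := by
    have : Continuous fun x => ψ y + (x - y) * (ψ (y + 1) - ψ y) := by fun_prop
    simpa using this.continuousWithinAt.tendsto (s := Ici y) (x := y)
  refine tendsto_of_tendsto_of_tendsto_of_le_of_le' tendsto_const_nhds hchord ?_ ?_
  · filter_upwards [self_mem_nhdsWithin] with x hx using hm self_mem_Ici hx hx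
  · filter_upwards [Icc_mem_nhdsGE (lt_add_one y)] with x ⟨hyx, hxy⟩
    have h := hc.2 (self_mem_Ici (a := y)) (mem_Ici.2 (by linarith : y ≤ y + 1))
      (by linarith : 0 ≤ 1 - (x - y)) (by linarith : 0 ≤ x - y) (by ring)
    simp only [smul_eq_mul] at h
    rw [show (1 - (x - y)) * y + (x - y) * (y + 1) = x by ring] at h
    linarith

lemma ConvexOn.comp_of_nonneg {E : Type*} [AddCommGroup E] [Module ℝ E] {s : Set E}
    {ψ : ℝ → ℝ} {h : E → ℝ} (hψ : ConvexOn ℝ (Ici 0) ψ) (hψm : MonotoneOn ψ (Ici 0))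
    (hh : ConvexOn ℝ s h) (hh0 : ∀ x ∈ s, 0 ≤ h x) : ConvexOn ℝ s (ψ ∘ h) := by
  refine ⟨hh.1, fun x hx y hy a b ha hb hab => ?_⟩
  have hcomb : 0 ≤ a • h x + b • h y :=
    add_nonneg (mul_nonneg ha (hh0 x hx)) (mul_nonneg hb (hh0 y hy))
  exact (hψm (hh0 _ (hh.1 hx hy ha hb hab)) hcomb (hh.2 hx hy ha hb hab)).trans
    (hψ.2 (hh0 x hx) (hh0 y hy) ha hb hab)

lemma convexOn_integral {Ω E : Type*} [MeasurableSpace Ω] {μ : Measure Ω} [AddCommGroup E]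
    [Module ℝ E] {s : Set E} (hs : Convex ℝ s) {F : E → Ω → ℝ}
    (hF : ∀ ω, ConvexOn ℝ s fun x => F x ω) (hint : ∀ x ∈ s, Integrable (F x) μ) :
    ConvexOn ℝ s fun x => ∫ ω, F x ω ∂μ := by
  refine ⟨hs, fun x hx y hy a b ha hb hab => ?_⟩
  calc ∫ ω, F (a • x + b • y) ω ∂μ ≤ ∫ ω, a * F x ω + b * F y ω ∂μ :=
        integral_mono (hint _ (hs hx hy ha hb hab))
          (((hint x hx).const_mul a).add ((hint y hy).const_mul b))
          fun ω => (hF ω).2 hx hy ha hb hab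
    _ = a • ∫ ω, F x ω ∂μ + b • ∫ ω, F y ω ∂μ := by
        rw [integral_add ((hint x hx).const_mul a) ((hint y hy).const_mul b),
          integral_const_mul, integral_const_mul]
        rfl

lemma MonotoneOn.of_prod_left {α β γ : Type*} [Preorder α] [Preorder β] [Preorder γ]
    {F : α → β → γ} {s : Set α} {t : Set β}
    (hF : MonotoneOn (fun p : α × β => F p.1 p.2) (s ×ˢ t)) {b : β} (hb : b ∈ t) :
    MonotoneOn (F · b) s :=
  fun _ ha _ ha' haa' => hF (mk_mem_prod ha hb) (mk_mem_prod ha' hb) ⟨haa', le_rfl⟩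

lemma MonotoneOn.of_prod_right {α β γ : Type*} [Preorder α] [Preorder β] [Preorder γ]
    {F : α → β → γ} {s : Set α} {t : Set β}
    (hF : MonotoneOn (fun p : α × β => F p.1 p.2) (s ×ˢ t)) {a : α} (ha : a ∈ s) :
    MonotoneOn (F a) t :=
  fun _ hb _ hb' hbb' => hF (mk_mem_prod ha hb) (mk_mem_prod ha hb') ⟨le_rfl, hbb'⟩

lemma measurable_abs_max_of_continuousOn_of_monotoneOn {f : ℝ → ℝ → ℝ}
    (hcont : ∀ y, 0 ≤ y → ContinuousOn (f · y) (Ici 0))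
    (hmono : ∀ x, 0 ≤ x → MonotoneOn (f x) (Ici 0)) :
    Measurable fun p : ℝ × ℝ => f |p.1| (max p.2 0) :=
  measurable_uncurry_of_continuous_of_measurable (u := fun a b => f |a| (max b 0))
    (fun _ => (hcont _ (le_max_right _ _)).comp_continuous continuous_abs abs_nonneg)
    (fun a => Monotone.measurable fun _ _ hbb' => hmono |a| (abs_nonneg a)
      (mem_Ici.2 (le_max_right _ _)) (mem_Ici.2 (le_max_right _ _)) (max_le_max hbb' le_rfl))

section SignSymmetry

variable {Ω ι : Type*} [MeasurableSpace Ω] {μ : Measure Ω} [DecidableEq ι] {ε : ι → Ω → ℝ}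

lemma map_signFlip_eq_map (hε : ∀ j, Measurable (ε j)) (hindep : iIndepFun ε μ)
    (hsymm : ∀ j, μ.map (ε j) = μ.map fun ω => -ε j ω) (A : Finset ι) :
    μ.map (fun ω => signFlip A fun j => ε j ω) = μ.map fun ω j => ε j ω := by
  have hflip : ∀ j, Measurable fun t : ℝ => if j ∈ A then -t else t := fun j => by
    split_ifs
    · exact measurable_neg
    · exact measurable_id
  rw [show (fun ω => signFlip A fun j => ε j ω)
      = fun ω j => ((fun t : ℝ => if j ∈ A then -t else t) ∘ ε j) ω from rfl,
    (hindep.comp _ hflip).map_fun_eq_infinitePi_map (fun j => (hflip j).comp (hε j)),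
    hindep.map_fun_eq_infinitePi_map hε]
  congr 1
  funext j
  by_cases hj : j ∈ A
  · simp only [hj, if_true, hsymm j]
    rfl
  · simp only [hj, if_false]
    rfl

lemma integral_comp_signFlip (hε : ∀ j, Measurable (ε j)) (hindep : iIndepFun ε μ)
    (hsymm : ∀ j, μ.map (ε j) = μ.map fun ω => -ε j ω) (A : Finset ι) {H : (ι → ℝ) → ℝ}
    (hH : Measurable H) :
    ∫ ω, H (signFlip A fun j => ε j ω) ∂μ = ∫ ω, H (fun j => ε j ω) ∂μ := by
  have hE : Measurable fun ω j => ε j ω := measurable_pi_lambda _ hε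
  have hflipE : Measurable fun ω => signFlip A fun j => ε j ω := (measurable_signFlip A).comp hE
  calc ∫ ω, H (signFlip A fun j => ε j ω) ∂μ
      = ∫ v, H v ∂(μ.map fun ω => signFlip A fun j => ε j ω) :=
        (integral_map hflipE.aemeasurable hH.aestronglyMeasurable).symm
    _ = ∫ v, H v ∂(μ.map fun ω j => ε j ω) := by rw [map_signFlip_eq_map hε hindep hsymm]
    _ = ∫ ω, H (fun j => ε j ω) ∂μ := integral_map hE.aemeasurable hH.aestronglyMeasurable

lemma integrable_comp_signFlip (hε : ∀ j, Measurable (ε j)) (hindep : iIndepFun ε μ)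
    (hsymm : ∀ j, μ.map (ε j) = μ.map fun ω => -ε j ω) (A : Finset ι) {H : (ι → ℝ) → ℝ}
    (hH : Measurable H) (hint : Integrable (fun ω => H fun j => ε j ω) μ) :
    Integrable (fun ω => H (signFlip A fun j => ε j ω)) μ := by
  have hE : Measurable fun ω j => ε j ω := measurable_pi_lambda _ hε
  have hflipE : Measurable fun ω => signFlip A fun j => ε j ω := (measurable_signFlip A).comp hE
  have hlaw : Integrable H (μ.map fun ω j => ε j ω) :=
    (integrable_map_measure hH.aestronglyMeasurable hE.aemeasurable).2 hint
  rw [← map_signFlip_eq_map hε hindep hsymm A] at hlaw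
  exact (integrable_map_measure hH.aestronglyMeasurable hflipE.aemeasurable).1 hlaw

lemma integral_sum_signFlip (hε : ∀ j, Measurable (ε j)) (hindep : iIndepFun ε μ)
    (hsymm : ∀ j, μ.map (ε j) = μ.map fun ω => -ε j ω) (T : Finset ι) {H : (ι → ℝ) → ℝ}
    (hH : Measurable H) (hint : Integrable (fun ω => H fun j => ε j ω) μ) :
    ∫ ω, ∑ A ∈ T.powerset, H (signFlip A fun j => ε j ω) ∂μ
      = 2 ^ T.card * ∫ ω, H (fun j => ε j ω) ∂μ := by
  rw [integral_finsetSum _ fun A _ => integrable_comp_signFlip hε hindep hsymm A hH hint]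
  simp only [integral_comp_signFlip hε hindep hsymm _ hH, sum_const, card_powerset, nsmul_eq_mul]
  norm_cast

end SignSymmetry

def splice (e : ℕ → ℝ) (k : ℕ) (x : ℝ) (v : ℕ → ℝ) : ℕ → ℝ :=
  fun j => if j < k then e j else if j = k then x else v j

lemma splice_eq_update (e : ℕ → ℝ) (k : ℕ) (x : ℝ) (v : ℕ → ℝ) :
    splice e k x v = Function.update (splice e k 0 v) k x := by
  ext j
  rcases eq_or_ne j k with rfl | hjk
  · simp [splice]
  · simp [splice, hjk]

lemma signFlip_splice {A : Finset ℕ} {k : ℕ} (hA : ∀ j ∈ A, k < j) (e : ℕ → ℝ) (x : ℝ)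
    (v : ℕ → ℝ) : signFlip A (splice e k x v) = splice e k x (signFlip A v) := by
  ext j
  by_cases hjk : k < j
  · simp [signFlip, splice, hjk.not_gt, hjk.ne']
  · have hjA : j ∉ A := fun h => hjk (hA j h)
    simp [signFlip, splice, hjA]

lemma measurable_splice (e : ℕ → ℝ) (k : ℕ) (x : ℝ) : Measurable (splice e k x) :=
  measurable_pi_lambda _ fun j => by
    unfold splice
    split_ifs
    · exact measurable_const
    · exact measurable_const
    · exact measurable_pi_apply j

structure IsVolatilityMap (f : ℝ → ℝ → ℝ) : Prop where
  nonneg : ∀ x y, 0 ≤ x → 0 ≤ y → 0 ≤ f x y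
  monotoneOn_left : ∀ y, 0 ≤ y → MonotoneOn (f · y) (Ici 0)
  monotoneOn_right : ∀ x, 0 ≤ x → MonotoneOn (f x) (Ici 0)
  convexOn_left : ∀ y, 0 ≤ y → ConvexOn ℝ (Ici 0) (f · y)
  convexOn_right : ∀ x, 0 ≤ x → ConvexOn ℝ (Ici 0) (f x)

/-- `volatility f s0 v j` is `σ_j` when the innovations take the values `v`. -/
def volatility (f : ℝ → ℝ → ℝ) (s0 : ℝ) (v : ℕ → ℝ) : ℕ → ℝ
  | 0 => s0
  | j + 1 => f |v j| (volatility f s0 v j)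

def cumReturn (f : ℝ → ℝ → ℝ) (s0 : ℝ) (n : ℕ) (v : ℕ → ℝ) : ℝ :=
  ∑ j ∈ range (n + 1), volatility f s0 v j * v j

section Volatility

variable {f : ℝ → ℝ → ℝ} {s0 : ℝ}

lemma volatility_eq_of_abs_eq {v w : ℕ → ℝ} {j : ℕ} (h : ∀ i < j, |v i| = |w i|) :
    volatility f s0 v j = volatility f s0 w j := by
  induction j with
  | zero => rfl
  | succ j ih =>
    simp only [volatility, h j j.lt_succ_self, ih fun i hi => h i (hi.trans j.lt_succ_self)]

lemma volatility_signFlip (A : Finset ℕ) (v : ℕ → ℝ) :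
    volatility f s0 (signFlip A v) = volatility f s0 v :=
  funext fun _ => volatility_eq_of_abs_eq fun i _ => abs_signFlip A v i

lemma volatility_update_of_le {k j : ℕ} (hj : j ≤ k) (v : ℕ → ℝ) (x : ℝ) :
    volatility f s0 (Function.update v k x) j = volatility f s0 v j :=
  volatility_eq_of_abs_eq fun i hi => by rw [Function.update_of_ne (by omega)]

lemma volatility_nonneg (hf : IsVolatilityMap f) (hs0 : 0 ≤ s0) (v : ℕ → ℝ) (j : ℕ) :
    0 ≤ volatility f s0 v j := by
  induction j with
  | zero => exact hs0
  | succ j ih => exact hf.nonneg _ _ (abs_nonneg _) ih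

lemma convexOn_volatility_update (hf : IsVolatilityMap f) (hs0 : 0 ≤ s0) (v : ℕ → ℝ)
    (k j : ℕ) : ConvexOn ℝ univ fun x => volatility f s0 (Function.update v k x) j := by
  induction j with
  | zero => exact convexOn_const _ convex_univ
  | succ j ih =>
    rcases lt_trichotomy j k with hjk | rfl | hkj
    · simp only [volatility_update_of_le (Nat.succ_le_of_lt hjk)]
      exact convexOn_const _ convex_univ
    · have hσ := volatility_nonneg hf hs0 v j
      simp only [volatility, Function.update_self, volatility_update_of_le le_rfl]
      exact (hf.convexOn_left _ hσ).comp_of_nonneg (hf.monotoneOn_left _ hσ) convexOn_univ_norm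
        fun x _ => abs_nonneg x
    · simp only [volatility, Function.update_of_ne hkj.ne']
      exact (hf.convexOn_right _ (abs_nonneg _)).comp_of_nonneg
        (hf.monotoneOn_right _ (abs_nonneg _)) ih fun _ _ => volatility_nonneg hf hs0 _ j

lemma measurable_volatility (hf : IsVolatilityMap f) (hs0 : 0 ≤ s0) (j : ℕ) :
    Measurable fun v => volatility f s0 v j := by
  induction j with
  | zero => exact measurable_const
  | succ j ih =>
    have hf_meas := measurable_abs_max_of_continuousOn_of_monotoneOn (f := f)
      (fun y hy => (hf.convexOn_left y hy).continuousOn_Ici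
        ((hf.convexOn_left y hy).continuousWithinAt_Ici_of_monotoneOn (hf.monotoneOn_left y hy)))
      hf.monotoneOn_right
    have := hf_meas.comp ((measurable_pi_apply j).prodMk ih)
    show Measurable fun v => f |v j| (volatility f s0 v j)
    simpa only [Function.comp_def, max_eq_left (volatility_nonneg hf hs0 _ j)] using this

lemma measurable_cumReturn (hf : IsVolatilityMap f) (hs0 : 0 ≤ s0) (n : ℕ) :
    Measurable (cumReturn f s0 n) :=
  Finset.measurable_sum _ fun j _ => (measurable_volatility hf hs0 j).mul (measurable_pi_apply j)

lemma cumReturn_signFlip {k n : ℕ} (hk : k ≤ n) {A : Finset ℕ} (hA : A ⊆ Ioc k n)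
    (w : ℕ → ℝ) : cumReturn f s0 n (signFlip A w) = ∑ j ∈ range (k + 1), volatility f s0 w j * w j
      + ∑ j ∈ Ioc k n, signFlip A (fun j => volatility f s0 w j * w j) j := by
  have hsplit : range (n + 1) = range (k + 1) ∪ Ioc k n := by
    ext j; simp only [Finset.mem_range, Finset.mem_union, Finset.mem_Ioc]; omega
  have hdisj : Disjoint (range (k + 1)) (Ioc k n) :=
    disjoint_left.2 fun j hj hj' => by simp only [Finset.mem_range, Finset.mem_Ioc] at hj hj'; omega
  rw [cumReturn, volatility_signFlip, hsplit, sum_union hdisj]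
  congr 1
  · refine sum_congr rfl fun j hj => ?_
    rw [signFlip_of_notMem fun hjA => ?_]
    have := hA hjA
    simp only [Finset.mem_range, Finset.mem_Ioc] at hj this
    omega
  · refine sum_congr rfl fun j _ => ?_
    unfold signFlip
    split_ifs <;> ring

lemma sum_range_succ_volatility_update (k : ℕ) (v : ℕ → ℝ) (x : ℝ) :
    ∑ j ∈ range (k + 1), volatility f s0 (Function.update v k x) j * Function.update v k x j
      = ∑ j ∈ range k, volatility f s0 v j * v j + volatility f s0 v k * x := by
  rw [sum_range_succ, Function.update_self, volatility_update_of_le le_rfl]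
  congr 1
  refine sum_congr rfl fun j hj => ?_
  have hjk : j < k := Finset.mem_range.1 hj
  rw [volatility_update_of_le hjk.le, Function.update_of_ne hjk.ne]

theorem convexOn_sum_signFlip_cumReturn_update {φ : ℝ → ℝ} (hφ : ConvexOn ℝ univ φ)
    (hf : IsVolatilityMap f) (hs0 : 0 ≤ s0) {k n : ℕ} (hk : k ≤ n) (v : ℕ → ℝ) :
    ConvexOn ℝ univ fun x => ∑ A ∈ (Finset.Ioc k n).powerset,
      φ (cumReturn f s0 n (signFlip A (Function.update v k x))) := by
  have hsum : ∀ x, ∑ A ∈ (Finset.Ioc k n).powerset,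
      φ (cumReturn f s0 n (signFlip A (Function.update v k x)))
      = signSum φ (Finset.Ioc k n)
          (∑ j ∈ range k, volatility f s0 v j * v j + volatility f s0 v k * x)
          fun j => volatility f s0 (Function.update v k x) j * Function.update v k x j :=
    fun x => sum_congr rfl fun A hA => by
      rw [cumReturn_signFlip hk (mem_powerset.1 hA), sum_range_succ_volatility_update]
  simp only [hsum]
  refine convexOn_signSum_of_convexOn_abs hφ _ _ _ fun j hj => ?_
  have hkj : j ≠ k := by simp only [Finset.mem_Ioc] at hj; omega
  simp only [Function.update_of_ne hkj, abs_mul, abs_of_nonneg (volatility_nonneg hf hs0 _ _)]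
  simpa only [smul_eq_mul, mul_comm] using
    (convexOn_volatility_update hf hs0 v k j).smul (abs_nonneg (v j))

lemma convexOn_sum_cumReturn_splice_signFlip {φ : ℝ → ℝ} (hφ : ConvexOn ℝ univ φ)
    (hf : IsVolatilityMap f) (hs0 : 0 ≤ s0) {k n : ℕ} (hk : k ≤ n) (e v : ℕ → ℝ) :
    ConvexOn ℝ univ fun x => ∑ A ∈ (Finset.Ioc k n).powerset,
      φ (cumReturn f s0 n (splice e k x (signFlip A v))) := by
  convert convexOn_sum_signFlip_cumReturn_update hφ hf hs0 hk (splice e k 0 v) using 2 with x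
  refine sum_congr rfl fun A hA => ?_
  have hA' : ∀ j ∈ A, k < j := fun j hj => (Finset.mem_Ioc.1 (mem_powerset.1 hA hj)).1
  rw [← signFlip_splice hA', splice_eq_update]

end Volatility

theorem stmt11_general {Ω : Type*} [MeasurableSpace Ω] (μ : Measure Ω)
    (f : ℝ → ℝ → ℝ)
    (hf_mono : MonotoneOn (fun p : ℝ × ℝ => f p.1 p.2) (Set.Ici 0 ×ˢ Set.Ici 0))
    (hf_cx1 : ∀ y ∈ Set.Ici (0:ℝ), ConvexOn ℝ (Set.Ici (0:ℝ)) (fun x => f x y))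
    (hf_cx2 : ∀ x ∈ Set.Ici (0:ℝ), ConvexOn ℝ (Set.Ici (0:ℝ)) (fun y => f x y))
    (hf_nonneg : ∀ x y, 0 ≤ x → 0 ≤ y → 0 ≤ f x y)
    (ε : ℕ → Ω → ℝ) (hεmeas : ∀ j, Measurable (ε j))
    (hindep : iIndepFun (m := fun _ : ℕ => Real.measurableSpace) ε μ)
    (hsymm : ∀ j, Measure.map (ε j) μ = Measure.map (fun ω => -(ε j ω)) μ)
    (n k : ℕ) (hk : k ≤ n)
    (s0 : ℝ) (hs0 : 0 ≤ s0) (e : ℕ → ℝ)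
    (φ : ℝ → ℝ) (hφ : ConvexOn ℝ univ φ)
    -- the volatility functional: `g v j = σ_j` when the innovations take the values `v`
    (g : (ℕ → ℝ) → ℕ → ℝ)
    (hg0 : ∀ v, g v 0 = s0)
    (hgrec : ∀ v j, g v (j + 1) = f |v j| (g v j))
    -- the total logreturn functional
    (S : (ℕ → ℝ) → ℝ)
    (hS : ∀ v, S v = ∑ j ∈ range (n + 1), g v j * v j)
    -- the mixed innovation vector: fixed values below `k`, the variable `x` at `k`,
    -- random innovations above `k`
    (inn : ℝ → Ω → ℕ → ℝ)
    (hinn : ∀ x ω j, inn x ω j = if j < k then e j else if j = k then x else ε j ω)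
    (hint : ∀ x : ℝ, Integrable (fun ω => φ (S (inn x ω))) μ) :
    ConvexOn ℝ univ (fun x => ∫ ω, φ (S (inn x ω)) ∂μ) := by
  obtain rfl : g = volatility f s0 := by
    funext v j
    induction j with
    | zero => exact hg0 v
    | succ j ih => rw [hgrec, ih]; rfl
  obtain rfl : S = cumReturn f s0 n := funext hS
  obtain rfl : inn = fun x ω => splice e k x fun j => ε j ω := by
    funext x ω j
    exact hinn x ω j
  have hf : IsVolatilityMap f := ⟨hf_nonneg, fun _ hy => hf_mono.of_prod_left hy,
    fun _ hx => hf_mono.of_prod_right hx, hf_cx1, hf_cx2⟩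
  have hH : ∀ x, Measurable fun v => φ (cumReturn f s0 n (splice e k x v)) := fun x =>
    (continuousOn_univ.1 (hφ.continuousOn isOpen_univ)).measurable.comp
      ((measurable_cumReturn hf hs0 n).comp (measurable_splice e k x))
  have havg : ∀ x, ∫ ω, φ (cumReturn f s0 n (splice e k x fun j => ε j ω)) ∂μ
      = (2 ^ (Finset.Ioc k n).card : ℝ)⁻¹ * ∫ ω, ∑ A ∈ (Finset.Ioc k n).powerset,
          φ (cumReturn f s0 n (splice e k x (signFlip A fun j => ε j ω))) ∂μ := fun x => by
    rw [integral_sum_signFlip hεmeas hindep hsymm _ (hH x) (hint x),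
      inv_mul_cancel_left₀ (by positivity)]
  simp only [havg]
  exact (convexOn_integral convex_univ
    (fun ω => convexOn_sum_cumReturn_splice_signFlip hφ hf hs0 hk e fun j => ε j ω)
    fun x _ => integrable_finsetSum _ fun A _ =>
      integrable_comp_signFlip hεmeas hindep hsymm A (hH x) (hint x)).smul (by positivity)

/-- in model M1 with independent symmetric innovations, for convex `φ`, the
conditional expectation `x ↦ E[φ(S_n) | σ₀ = s₀, ε₀ = e₀, …, ε_{k-1} = e_{k-1}, ε_k = x]`
is convex.  Here `S_n = Σ_{j≤n} σ_j ε_j` with `σ₀ = s₀`, `σ_{j+1} = f(|ε_j|, σ_j)`; by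
independence, the conditional expectation is obtained by fixing the first `k` innovations
at the values `e₀, …, e_{k-1}`, setting `ε_k = x`, and integrating over the remaining
innovations. -/
theorem stmt11 {Ω : Type*} [MeasurableSpace Ω] (μ : Measure Ω) [IsProbabilityMeasure μ]
    (f : ℝ → ℝ → ℝ)
    (hf_mono : MonotoneOn (fun p : ℝ × ℝ => f p.1 p.2) (Set.Ici 0 ×ˢ Set.Ici 0))
    (hf_cx1 : ∀ y ∈ Set.Ici (0:ℝ), ConvexOn ℝ (Set.Ici (0:ℝ)) (fun x => f x y))
    (hf_cx2 : ∀ x ∈ Set.Ici (0:ℝ), ConvexOn ℝ (Set.Ici (0:ℝ)) (fun y => f x y))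
    (hf_nonneg : ∀ x y, 0 ≤ x → 0 ≤ y → 0 ≤ f x y)
    (ε : ℕ → Ω → ℝ) (hεmeas : ∀ j, Measurable (ε j))
    (hindep : iIndepFun (m := fun _ : ℕ => Real.measurableSpace) ε μ)
    (hsymm : ∀ j, Measure.map (ε j) μ = Measure.map (fun ω => -(ε j ω)) μ)
    (n k : ℕ) (hk : k ≤ n)
    (s0 : ℝ) (hs0 : 0 ≤ s0) (e : ℕ → ℝ)
    (φ : ℝ → ℝ) (hφ : ConvexOn ℝ univ φ)
    -- the volatility functional: `g v j = σ_j` when the innovations take the values `v`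
    (g : (ℕ → ℝ) → ℕ → ℝ)
    (hg0 : ∀ v, g v 0 = s0)
    (hgrec : ∀ v j, g v (j + 1) = f |v j| (g v j))
    -- the total logreturn functional
    (S : (ℕ → ℝ) → ℝ)
    (hS : ∀ v, S v = ∑ j ∈ range (n + 1), g v j * v j)
    -- the mixed innovation vector: fixed values below `k`, the variable `x` at `k`,
    -- random innovations above `k`
    (inn : ℝ → Ω → ℕ → ℝ)
    (hinn : ∀ x ω j, inn x ω j = if j < k then e j else if j = k then x else ε j ω)
    (hint : ∀ x : ℝ, Integrable (fun ω => φ (S (inn x ω))) μ) :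
    ConvexOn ℝ univ (fun x => ∫ ω, φ (S (inn x ω)) ∂μ) :=
  stmt11_general μ f hf_mono hf_cx1 hf_cx2 hf_nonneg ε hεmeas hindep hsymm n k hk s0 hs0 e φ hφ g
    hg0 hgrec S hS inn hinn hint
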